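/- arXiv:1705.10983 — 6 statements merged into one kernel-verified Lean document; each statement's English description precedes it below -/
import Mathlib

section
/- For a topological space X, a subset S ⊆ X is nowhere meager in X (i.e., S ∩ U is non-meager in X for every non-empty open U ⊆ X) if and only if S is dense in X and S is a Baire space in the subspace topology. -/
/-!
For a dense subspace `S`, a subset of `S` is meagre in `S` exactly when it is meagre in `X`:
the inclusion pulls dense open sets of `X` back to dense open sets of `S`, and pushes nowhere
dense sets forward. Since a space is Baire iff no nonempty open set is meagre, and the nonempty
open sets of `S` are the traces `S ∩ U` of open `U` meeting `S`, the two conditions match.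
-/

open Set Filter

section

variable {X : Type*} [TopologicalSpace X]

theorem baireSpace_of_forall_isOpen_not_isMeagre
    (h : ∀ U : Set X, IsOpen U → U.Nonempty → ¬IsMeagre U) : BaireSpace X := by
  refine ⟨fun f hfo hfd => dense_iff_inter_open.mpr fun U hU hne => ?_⟩
  by_contra hempty
  have hres : (⋂ n, f n) ∈ residual X :=
    countable_iInter_mem.mpr fun n => residual_of_dense_open (hfo n) (hfd n)
  exact h U hU hne (mem_of_superset hres fun x hx hxU => hempty ⟨x, hxU, hx⟩)

theorem baireSpace_iff_forall_isOpen_not_isMeagre :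
    BaireSpace X ↔ ∀ U : Set X, IsOpen U → U.Nonempty → ¬IsMeagre U :=
  ⟨fun _ _ hU hne => not_isMeagre_of_isOpen hU hne, baireSpace_of_forall_isOpen_not_isMeagre⟩

theorem Dense.preimage_val_of_isOpen {S t : Set X} (hS : Dense S) (ht : IsOpen t)
    (htd : Dense t) : Dense (Subtype.val ⁻¹' t : Set S) := by
  rw [Subtype.dense_iff, Subtype.image_preimage_coe, (hS.inter_of_isOpen_right htd ht).closure_eq]
  exact subset_univ S

theorem Dense.tendsto_residual_subtype_val {S : Set X} (hS : Dense S) :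
    Tendsto (Subtype.val : S → X) (residual S) (residual X) := by
  apply le_countableGenerate_iff_of_countableInterFilter.mpr
  rintro t ⟨ht, htd⟩
  exact residual_of_dense_open (ht.preimage continuous_subtype_val)
    (hS.preimage_val_of_isOpen ht htd)

theorem IsMeagre.preimage_val_of_dense {S t : Set X} (hS : Dense S) (h : IsMeagre t) :
    IsMeagre (Subtype.val ⁻¹' t : Set S) :=
  hS.tendsto_residual_subtype_val h

end

/-- `S` is nowhere meager in `X` (i.e. `S ∩ U` is non-meager in `X` for every
non-empty open `U`) iff `S` is dense in `X` and Baire as a subspace of `X`. -/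
theorem nowhereMeagre_iff_dense_and_baire {X : Type*} [TopologicalSpace X] (S : Set X) :
    (∀ U : Set X, IsOpen U → U.Nonempty → ¬ IsMeagre (S ∩ U)) ↔
      (Dense S ∧ BaireSpace S) := by
  rw [baireSpace_iff_forall_isOpen_not_isMeagre]
  constructor
  · intro h
    have hS : Dense S := dense_iff_inter_open.mpr fun U hU hne => by
      rw [inter_comm]
      exact nonempty_of_not_isMeagre (h U hU hne)
    refine ⟨hS, ?_⟩
    rintro V ⟨U, hU, rfl⟩ ⟨x, hx⟩ hV
    exact h U hU ⟨x, hx⟩ (by simpa using hV.image_val)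
  · rintro ⟨hS, hBaire⟩ U hU hne hSU
    obtain ⟨x, hxU, hxS⟩ := hS.inter_open_nonempty U hU hne
    exact hBaire _ (hU.preimage continuous_subtype_val) ⟨⟨x, hxS⟩, hxU⟩
      (by simpa using hSU.preimage_val_of_dense hS)
end

section
/- Let X and Y be completely metrizable spaces, A ⊆ X, B ⊆ Y, and f : A → B a homeomorphism. Then there exist G_δ sets S ⊆ X and T ⊆ Y with A ⊆ S, B ⊆ T, and a homeomorphism g : S → T extending f. -/
/-!
By Kuratowski's extension theorem, `f` extends continuously to the `G_δ` set of points of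
`closure A` at which the oscillation of `f` within `A` vanishes: there `f` has a limit
along `A` because `Y` is complete. Extending `f` and `f⁻¹` in this way to `g₁` on `S₁ ⊇ A` and
`g₂` on `T₁ ⊇ B`, the points `x ∈ S₁` with `g₁ x ∈ T₁` and `g₂ (g₁ x) = x` (and symmetrically
in `Y`) form the source and target of a partial homeomorphism. These sets are still `G_δ`: an
equalizer of continuous maps is relatively closed, and closed sets of a metrizable space are
`G_δ`.
-/

open Set Filter Topology Metric ENNReal

section GDelta

variable {X Y : Type*} [TopologicalSpace X] [TopologicalSpace Y]

theorem IsGδ.image_val {P : Set X} (hP : IsGδ P) {s : Set P} (hs : IsGδ s) :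
    IsGδ (Subtype.val '' s) := by
  obtain ⟨U, hU, rfl⟩ := isGδ_iff_eq_iInter_nat.1 hs
  choose V hV hVU using fun n => isOpen_induced_iff.1 (hU n)
  simp only [← hVU, ← preimage_iInter, Subtype.image_preimage_coe]
  exact hP.inter (.iInter_of_isOpen hV)

theorem IsGδ.inter_preimage_of_continuousOn {P : Set X} (hP : IsGδ P) {g : X → Y}
    (hg : ContinuousOn g P) {T : Set Y} (hT : IsGδ T) : IsGδ (P ∩ g ⁻¹' T) := by
  rw [← Subtype.image_preimage_coe]
  exact hP.image_val (s := P.domRestrict g ⁻¹' T) (hT.preimage hg.domRestrict)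

theorem IsGδ.sep_eq [PerfectlyNormalSpace X] [T2Space Y] {P : Set X} (hP : IsGδ P)
    {u v : X → Y} (hu : ContinuousOn u P) (hv : ContinuousOn v P) : IsGδ {x ∈ P | u x = v x} := by
  convert hP.image_val (isClosed_eq hu.domRestrict hv.domRestrict).isGδ using 1
  ext x
  simp [and_comm]

end GDelta

section Oscillation

variable {X Y : Type*} [TopologicalSpace X] [PseudoEMetricSpace Y] {f : X → Y} {A : Set X}

theorem isOpen_setOf_oscillationWithin_lt (f : X → Y) (A : Set X) (ε : ℝ≥0∞) :
    IsOpen {x | oscillationWithin f A x < ε} := by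
  refine isOpen_iff_mem_nhds.2 fun x hx => ?_
  obtain ⟨s, hs, hsε⟩ : ∃ s ∈ (𝓝[A] x).map f, ediam s < ε := by
    simpa [oscillationWithin, iInf_lt_iff] using hx
  obtain ⟨U, hU, hxU, hUs⟩ := mem_nhdsWithin.1 hs
  filter_upwards [hU.mem_nhds hxU] with y hy
  calc oscillationWithin f A y ≤ ediam s :=
        biInf_le _ (mem_nhdsWithin.2 ⟨U, hU, hy, hUs⟩)
    _ < ε := hsε

theorem isGδ_setOf_oscillationWithin_eq_zero (f : X → Y) (A : Set X) :
    IsGδ {x | oscillationWithin f A x = 0} := by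
  have : {x | oscillationWithin f A x = 0} =
      ⋂ n : ℕ, {x | oscillationWithin f A x < (n : ℝ≥0∞)⁻¹} := by
    ext x
    simp only [mem_ofPred_eq, mem_iInter]
    refine ⟨fun h n => by simp [h], fun h => ?_⟩
    by_contra hne
    obtain ⟨n, hn⟩ := exists_inv_nat_lt hne
    exact lt_asymm hn (h n)
  rw [this]
  exact .iInter_of_isOpen fun n => isOpen_setOf_oscillationWithin_lt f A _

theorem exists_tendsto_of_oscillationWithin_eq_zero [CompleteSpace Y] {x : X}
    (hx : x ∈ closure A) (h : oscillationWithin f A x = 0) :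
    ∃ y, Tendsto f (𝓝[A] x) (𝓝 y) := by
  have : (𝓝[A] x).NeBot := mem_closure_iff_nhdsWithin_neBot.1 hx
  refine CompleteSpace.complete (EMetric.cauchy_iff.2 ⟨map_neBot.ne, fun ε hε => ?_⟩)
  have hxε : oscillationWithin f A x < ε := by rwa [h]
  obtain ⟨s, hs, hsε⟩ : ∃ s ∈ (𝓝[A] x).map f, ediam s < ε := by
    simpa [oscillationWithin, iInf_lt_iff] using hxε
  exact ⟨s, hs, fun y hy z hz => (edist_le_ediam_of_mem hy hz).trans_lt hsε⟩

end Oscillation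

section Extension

variable {X Y : Type*} [TopologicalSpace X] [PerfectlyNormalSpace X] [PseudoEMetricSpace Y]
  [CompleteSpace Y]

theorem ContinuousOn.exists_isGδ_continuousOn_extendFrom {f : X → Y} {A : Set X}
    (hf : ContinuousOn f A) : ∃ S, IsGδ S ∧ A ⊆ S ∧ ContinuousOn (extendFrom A f) S :=
  ⟨closure A ∩ {x | oscillationWithin f A x = 0},
    isClosed_closure.isGδ.inter (isGδ_setOf_oscillationWithin_eq_zero f A),
    fun x hx => ⟨subset_closure hx, (hf x hx).oscillationWithin_eq_zero⟩,
    continuousOn_extendFrom inter_subset_left fun _ hx =>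
      exists_tendsto_of_oscillationWithin_eq_zero hx.1 hx.2⟩

theorem Continuous.exists_isGδ_continuousOn_extension [T2Space Y] [Nonempty Y] {A : Set X}
    {f : A → Y} (hf : Continuous f) :
    ∃ S, IsGδ S ∧ A ⊆ S ∧ ∃ g : X → Y, ContinuousOn g S ∧ ∀ a : A, g a = f a := by
  set φ := Function.extend Subtype.val f fun _ => Classical.arbitrary Y
  have hφ : ∀ a : A, φ a = f a := Subtype.val_injective.extend_apply f _
  have hφA : ContinuousOn φ A := continuousOn_iff_continuous_domRestrict.2 <| by
    convert hf
    exact funext hφ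
  obtain ⟨S, hS, hAS, hφS⟩ := hφA.exists_isGδ_continuousOn_extendFrom
  exact ⟨S, hS, hAS, extendFrom A φ, hφS, fun a => (extendFrom_extends hφA a a.2).trans (hφ a)⟩

end Extension

namespace PartialHomeomorph

variable {X Y : Type*} [TopologicalSpace X] [TopologicalSpace Y] {S₁ : Set X} {T₁ : Set Y}
  {g₁ : X → Y} {g₂ : Y → X}

def ofContinuousOn (hg₁ : ContinuousOn g₁ S₁) (hg₂ : ContinuousOn g₂ T₁) :
    PartialHomeomorph X Y where
  toFun := g₁
  invFun := g₂
  source := {x ∈ S₁ | g₁ x ∈ T₁ ∧ g₂ (g₁ x) = x}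
  target := {y ∈ T₁ | g₂ y ∈ S₁ ∧ g₁ (g₂ y) = y}
  map_source' := fun x ⟨hx, hx₁, hx₂⟩ => ⟨hx₁, by rwa [hx₂], by rw [hx₂]⟩
  map_target' := fun y ⟨hy, hy₂, hy₁⟩ => ⟨hy₂, by rwa [hy₁], by rw [hy₁]⟩
  left_inv' := fun _ hx => hx.2.2
  right_inv' := fun _ hy => hy.2.2
  continuousOn_toFun := hg₁.mono fun _ hx => hx.1
  continuousOn_invFun := hg₂.mono fun _ hy => hy.1

theorem isGδ_ofContinuousOn_source [PerfectlyNormalSpace X] [T2Space X] (hS₁ : IsGδ S₁)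
    (hT₁ : IsGδ T₁) (hg₁ : ContinuousOn g₁ S₁) (hg₂ : ContinuousOn g₂ T₁) :
    IsGδ (ofContinuousOn hg₁ hg₂).source := by
  have hP := hS₁.inter_preimage_of_continuousOn hg₁ hT₁
  convert hP.sep_eq (hg₂.comp (hg₁.mono inter_subset_left) fun _ hx => hx.2) continuousOn_id
    using 1
  ext x
  simp [ofContinuousOn, and_assoc]

theorem isGδ_ofContinuousOn_target [PerfectlyNormalSpace Y] [T2Space Y] (hS₁ : IsGδ S₁)
    (hT₁ : IsGδ T₁) (hg₁ : ContinuousOn g₁ S₁) (hg₂ : ContinuousOn g₂ T₁) :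
    IsGδ (ofContinuousOn hg₁ hg₂).target :=
  isGδ_ofContinuousOn_source hT₁ hS₁ hg₂ hg₁

end PartialHomeomorph

open PartialHomeomorph in
/-- Lavrentieff's homeomorphism extension theorem: a homeomorphism between
`A ⊆ X` and `B ⊆ Y` (with `X`, `Y` completely metrizable) extends to a
homeomorphism between `G_δ` sets `S ⊇ A` and `T ⊇ B`. -/
theorem lavrentieff_homeomorphism {X Y : Type*}
    [MetricSpace X] [CompleteSpace X] [MetricSpace Y] [CompleteSpace Y]
    (A : Set X) (B : Set Y) (f : A ≃ₜ B) :
    ∃ (S : Set X) (T : Set Y), IsGδ S ∧ IsGδ T ∧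
      ∃ (hAS : A ⊆ S) (_hBT : B ⊆ T) (g : S ≃ₜ T),
        ∀ a : A, ((g ⟨a.1, hAS a.2⟩ : T) : Y) = ((f a : B) : Y) := by
  rcases isEmpty_or_nonempty A with hA | ⟨⟨a₀⟩⟩
  · have : IsEmpty B := f.symm.toEquiv.isEmpty
    exact ⟨A, B, A.eq_empty_of_isEmpty ▸ .empty, B.eq_empty_of_isEmpty ▸ .empty, subset_rfl,
      subset_rfl, f, fun _ => rfl⟩
  have : Nonempty X := ⟨a₀⟩
  have : Nonempty Y := ⟨f a₀⟩
  obtain ⟨S₁, hS₁, hAS₁, g₁, hg₁, hg₁f⟩ :=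
    (continuous_subtype_val.comp f.continuous).exists_isGδ_continuousOn_extension
  obtain ⟨T₁, hT₁, hBT₁, g₂, hg₂, hg₂f⟩ :=
    (continuous_subtype_val.comp f.symm.continuous).exists_isGδ_continuousOn_extension
  have hg₂g₁ (a : A) : g₂ (g₁ a) = a := by simp [hg₁f a, hg₂f (f a)]
  have hg₁g₂ (b : B) : g₁ (g₂ b) = b := by simp [hg₂f b, hg₁f (f.symm b)]
  let e := ofContinuousOn hg₁ hg₂
  refine ⟨e.source, e.target, isGδ_ofContinuousOn_source hS₁ hT₁ hg₁ hg₂,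
    isGδ_ofContinuousOn_target hS₁ hT₁ hg₁ hg₂, fun a ha => ⟨hAS₁ ha, ?_, hg₂g₁ ⟨a, ha⟩⟩,
    fun b hb => ⟨hBT₁ hb, ?_, hg₁g₂ ⟨b, hb⟩⟩, e.toHomeomorphSourceTarget, hg₁f⟩
  · simpa [hg₁f ⟨a, ha⟩] using hBT₁ (f ⟨a, ha⟩).2
  · simpa [hg₂f ⟨b, hb⟩] using hAS₁ (f.symm ⟨b, hb⟩).2
end

section
/- The product of any family of Baire spaces, each of which has a countable pseudobase, is a Baire space. -/
/-!
Fix dense open sets `G n` and a nonempty open set `U` in the product.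

For countably many factors, enumerate the coordinates and freeze them one at a time. Every `G m`
stays dense on the slice cut out by the frozen coordinates, so the current open box can first be
shrunk into the next `G n`. The value of the next coordinate is then chosen with the Baire property
of its factor, in the manner of Kuratowski–Ulam: tested against a countable pseudobase of the
whole product, the values for which every `G m` remains dense on the smaller slice contain a dense
`Gδ`. Each coordinate is eventually frozen, and the frozen values form a point lying in all the
boxes, hence in `U` and in every `G n`.

For arbitrarily many factors, boxes with sides in the countable pseudobases can be refined into
each `G n`; closing under this refinement yields a countable set `S` of coordinates such that boxes
supported in `S` are refined by boxes supported in `S`. Extending points of `Π i : S, X i` by a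
fixed point outside `S` then pulls every `G n` back to a dense open set, and the countable case
applies.
-/

open Set Function

def IsPseudobase {X : Type*} [TopologicalSpace X] (B : Set (Set X)) : Prop :=
  (∀ b ∈ B, IsOpen b ∧ b.Nonempty) ∧
    ∀ U : Set X, IsOpen U → U.Nonempty → ∃ b ∈ B, b ⊆ U

def HasCountablePseudobase (X : Type*) [TopologicalSpace X] : Prop :=
  ∃ B : Set (Set X), B.Countable ∧ IsPseudobase B

theorem baireSpace_of_inter_iInter_nonempty {X : Type*} [TopologicalSpace X]
    (h : ∀ G : ℕ → Set X, (∀ n, IsOpen (G n)) → (∀ n, Dense (G n)) →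
      ∀ U, IsOpen U → U.Nonempty → (U ∩ ⋂ n, G n).Nonempty) : BaireSpace X :=
  ⟨fun G hGo hGd => dense_iff_inter_open.2 fun U hU hne => h G hGo hGd U hU hne⟩

theorem exists_seq_of_forall_exists_succ {α : Type*} {P : ℕ → α → Prop}
    {R : ℕ → α → α → Prop} {a : α} (h0 : P 0 a)
    (h : ∀ n a, P n a → ∃ b, P (n + 1) b ∧ R n a b) :
    ∃ f : ℕ → α, f 0 = a ∧ (∀ n, P n (f n)) ∧ ∀ n, R n (f n) (f (n + 1)) := by
  choose next hnext using fun n (a : {a // P n a}) => h n a a.2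
  let f : ∀ n, {a // P n a} := fun n =>
    Nat.rec ⟨a, h0⟩ (fun n b => ⟨next n b, (hnext n b).1⟩) n
  exact ⟨fun n => (f n).1, rfl, fun n => (f n).2, fun n => (hnext n (f n)).2⟩

theorem Set.Countable.setOf_finset_subset {α : Type*} {s : Set α} (hs : s.Countable) :
    {F : Finset α | ↑F ⊆ s}.Countable := by
  refine ((countable_ofPred_finite_subset hs).preimage Finset.coe_injective).mono ?_
  intro F hF
  exact ⟨F.finite_toSet, hF⟩

theorem exists_countable_superset_closed {α : Type*} (φ : Finset α → Set α)
    (hφ : ∀ F, (φ F).Countable) {S₀ : Set α} (hS₀ : S₀.Countable) :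
    ∃ S, S₀ ⊆ S ∧ S.Countable ∧ ∀ F : Finset α, ↑F ⊆ S → φ F ⊆ S := by
  let T : ℕ → Set α := fun n =>
    Nat.rec S₀ (fun _ T => T ∪ ⋃ F ∈ {F : Finset α | ↑F ⊆ T}, φ F) n
  have hT : ∀ n, (T n).Countable := by
    intro n
    induction n with
    | zero => exact hS₀
    | succ n ih => exact ih.union (ih.setOf_finset_subset.biUnion fun F _ => hφ F)
  have hmono : Monotone T := monotone_nat_of_le_succ fun n => subset_union_left
  refine ⟨⋃ n, T n, subset_iUnion T 0, countable_iUnion hT, fun F hF => ?_⟩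
  obtain ⟨n, hn⟩ := hmono.directed_le.exists_mem_subset_of_finset_subset_biUnion hF
  exact (subset_biUnion_of_mem (u := φ) (show F ∈ {F : Finset α | ↑F ⊆ T n} from hn)).trans
    (subset_union_right.trans (subset_iUnion T (n + 1)))

section Boxes

variable {ι : Type*} {X : ι → Type*}

/-- Boxes are coded by finsets of pairs `⟨i, b⟩` so that, with sides from countable pseudobases,
the codes supported in a countable set of coordinates form a countable family. -/
def sigmaBox (c : Finset (Σ i, Set (X i))) : Set (∀ i, X i) := {x | ∀ p ∈ c, x p.1 ∈ p.2}

def boxCodes (B : ∀ i, Set (Set (X i))) (S : Set ι) : Set (Finset (Σ i, Set (X i))) :=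
  {c | ∀ p ∈ c, p.1 ∈ S ∧ p.2 ∈ B p.1}

variable {B : ∀ i, Set (Set (X i))} {S : Set ι} {c : Finset (Σ i, Set (X i))}

theorem countable_boxCodes (hB : ∀ i, (B i).Countable) (hS : S.Countable) :
    (boxCodes B S).Countable := by
  have hT : {p : Σ i, Set (X i) | p.1 ∈ S ∧ p.2 ∈ B p.1}.Countable := by
    refine (hS.biUnion fun i _ => (hB i).image fun b => (⟨i, b⟩ : Σ i, Set (X i))).mono ?_
    rintro ⟨i, b⟩ ⟨hi, hb⟩
    exact mem_biUnion hi (mem_image_of_mem _ hb)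
  exact hT.setOf_finset_subset.mono fun c hc p hp => hc p hp

theorem sigmaBox_anti {c c' : Finset (Σ i, Set (X i))} (h : c ⊆ c') :
    sigmaBox c' ⊆ sigmaBox c :=
  fun _ hx p hp => hx p (h hp)

theorem mem_sigmaBox_of_eqOn (hc : c ∈ boxCodes B S) {x y : ∀ i, X i}
    (hxy : ∀ i ∈ S, x i = y i) (hx : x ∈ sigmaBox c) : y ∈ sigmaBox c :=
  fun p hp => hxy p.1 (hc p hp).1 ▸ hx p hp

open Classical in
theorem sigmaBox_filter_subset_preimage_domRestrict (hne : (sigmaBox c).Nonempty)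
    {V : Set (∀ i : S, X i)} (h : sigmaBox c ⊆ S.domRestrict ⁻¹' V) :
    sigmaBox (c.filter (·.1 ∈ S)) ⊆ S.domRestrict ⁻¹' V := by
  obtain ⟨x₁, hx₁⟩ := hne
  intro x hx
  have hmerge : S.piecewise x x₁ ∈ sigmaBox c := fun p hp => by
    by_cases hpS : p.1 ∈ S
    · rw [piecewise_eq_of_mem _ _ _ hpS]
      exact hx p (Finset.mem_filter.2 ⟨hp, hpS⟩)
    · rw [piecewise_eq_of_notMem _ _ _ hpS]
      exact hx₁ p hp
  have hrestrict : S.domRestrict (S.piecewise x x₁) = S.domRestrict x :=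
    funext fun i => piecewise_eq_of_mem _ _ _ i.2
  rw [mem_preimage, ← hrestrict]
  exact h hmerge

variable [∀ i, TopologicalSpace (X i)]

theorem exists_pi_univ_subset {U : Set (∀ i, X i)} (hU : IsOpen U) {x : ∀ i, X i}
    (hx : x ∈ U) :
    ∃ s : ∀ i, Set (X i), IsOpen (pi univ s) ∧ x ∈ pi univ s ∧ pi univ s ⊆ U := by
  classical
  obtain ⟨I, u, hu, hIu⟩ := isOpen_pi_iff.1 hU x hx
  refine ⟨fun i => if i ∈ (I : Set ι) then u i else univ, ?_⟩
  rw [pi_univ_ite]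
  exact ⟨isOpen_set_pi I.finite_toSet fun i hi => (hu i hi).1, fun i hi => (hu i hi).2, hIu⟩

theorem isOpen_sigmaBox (hB : ∀ i, IsPseudobase (B i)) (hc : c ∈ boxCodes B S) :
    IsOpen (sigmaBox c) := by
  have : sigmaBox c = ⋂ p ∈ c, eval p.1 ⁻¹' p.2 := by ext; simp [sigmaBox]
  rw [this]
  exact isOpen_biInter_finset fun p hp =>
    ((hB p.1).1 _ (hc p hp).2).1.preimage (continuous_apply _)

theorem exists_sigmaBox_subset (hB : ∀ i, IsPseudobase (B i)) {U : Set (∀ i, X i)}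
    (hU : IsOpen U) (hne : U.Nonempty) :
    ∃ c ∈ boxCodes B univ, (sigmaBox c).Nonempty ∧ sigmaBox c ⊆ U := by
  classical
  obtain ⟨x, hx⟩ := hne
  obtain ⟨I, u, hu, hIu⟩ := isOpen_pi_iff.1 hU x hx
  choose! b hbB hbu using fun i (hi : i ∈ I) =>
    (hB i).2 (u i) (hu i hi).1 ⟨x i, (hu i hi).2⟩
  have hy : ∀ i, ∃ yi : X i, i ∈ I → yi ∈ b i := fun i =>
    if hi : i ∈ I then (((hB i).1 _ (hbB i hi)).2).imp fun _ h _ => h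
    else ⟨x i, fun h => absurd h hi⟩
  choose y hy using hy
  have mem : ∀ z, z ∈ sigmaBox (I.image fun i => ⟨i, b i⟩) ↔ ∀ i ∈ I, z i ∈ b i := by
    simp [sigmaBox]
  refine ⟨I.image fun i => ⟨i, b i⟩, ?_, ⟨I.piecewise y x, (mem _).2 fun i hi => ?_⟩,
    fun z hz => hIu fun i hi => hbu i hi ((mem z).1 hz i hi)⟩
  · simpa [boxCodes] using hbB
  · rw [Finset.piecewise_eq_of_mem _ _ _ hi]
    exact hy i hi

theorem HasCountablePseudobase.pi [Countable ι] (h : ∀ i, HasCountablePseudobase (X i)) :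
    HasCountablePseudobase (∀ i, X i) := by
  choose B hBc hB using h
  refine ⟨sigmaBox '' {c | c ∈ boxCodes B univ ∧ (sigmaBox c).Nonempty},
    ((countable_boxCodes hBc countable_univ).mono fun c hc => hc.1).image _, ?_, ?_⟩
  · rintro _ ⟨c, ⟨hc, hne⟩, rfl⟩
    exact ⟨isOpen_sigmaBox hB hc, hne⟩
  · intro U hU hne
    obtain ⟨c, hc, hcne, hcU⟩ := exists_sigmaBox_subset hB hU hne
    exact ⟨_, ⟨c, ⟨hc, hcne⟩, rfl⟩, hcU⟩

end Boxes

section Freezing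

variable {ι : Type*} [DecidableEq ι] {X : ι → Type*}

theorem Finset.piecewise_insert_update {F : Finset ι} {j : ι} (hj : j ∉ F) (z x : ∀ i, X i)
    (v : X j) : (insert j F).piecewise (update z j v) x = F.piecewise z (update x j v) := by
  ext i
  by_cases hij : i = j
  · subst hij
    simp [hj]
  · by_cases hi : i ∈ F <;> simp [hi, hij]

theorem apply_eq_of_mem_frozen {e : ℕ → ι} {z : ℕ → ∀ i, X i}
    (hz : ∀ n, ∃ v, z (n + 1) = update (z n) (e n) v ∧
      (e n ∈ (Finset.range n).image e → v = z n (e n)))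
    {i : ι} {k k' : ℕ} (hi : i ∈ (Finset.range k).image e) (hkk' : k ≤ k') :
    z k' i = z k i := by
  induction k', hkk' using Nat.le_induction with
  | base => rfl
  | succ k' hk' ih =>
    obtain ⟨v, hzv, hvz⟩ := hz k'
    rw [hzv]
    by_cases hik : i = e k'
    · subst hik
      rw [update_self, hvz (Finset.image_subset_image (Finset.range_subset_range.2 hk') hi), ih]
    · rw [update_of_ne hik, ih]

theorem pi_inter_iInter_nonempty_of_freeze {G : ℕ → Set (∀ i, X i)} {e : ℕ → ι}
    (he : Surjective e) {z : ℕ → ∀ i, X i} {s : ℕ → ∀ i, Set (X i)}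
    (hfix : ∀ n, ∃ q ∈ pi univ (s n), ((Finset.range n).image e).piecewise (z n) q = q)
    (hz : ∀ n, ∃ v, z (n + 1) = update (z n) (e n) v ∧
      (e n ∈ (Finset.range n).image e → v = z n (e n)))
    (hs : ∀ n, pi univ (s (n + 1)) ⊆
      pi univ (s n) ∩ (((Finset.range n).image e).piecewise (z n) ·) ⁻¹' G n) :
    (pi univ (s 0) ∩ ⋂ n, G n).Nonempty := by
  choose t ht using he
  have frozen : ∀ {i k}, t i < k → i ∈ (Finset.range k).image e := fun h =>
    Finset.mem_image.2 ⟨_, Finset.mem_range.2 h, ht _⟩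
  let x : ∀ i, X i := fun i => z (t i + 1) i
  have hx : ∀ {i k}, i ∈ (Finset.range k).image e → x i = z k i := fun {i k} hi =>
    calc x i = z (max k (t i + 1)) i :=
          (apply_eq_of_mem_frozen hz (frozen (Nat.lt_succ_self _)) (le_max_right _ _)).symm
      _ = z k i := apply_eq_of_mem_frozen hz hi (le_max_left _ _)
  have hs_anti : Antitone fun n => pi univ (s n) :=
    antitone_nat_of_succ_le fun n => (hs n).trans inter_subset_left
  have hxs : ∀ k, x ∈ pi univ (s k) := by
    intro k i _
    obtain ⟨q, hq, hqz⟩ := hfix (max k (t i + 1))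
    have hi : i ∈ (Finset.range (max k (t i + 1))).image e :=
      frozen (Nat.lt_of_lt_of_le (Nat.lt_succ_self _) (le_max_right k _))
    have hqi : q i = x i := by
      rw [hx hi, ← congrFun hqz i, Finset.piecewise_eq_of_mem _ _ _ hi]
    exact hqi ▸ hs_anti (le_max_left k _) hq i trivial
  have hxfix : ∀ k, ((Finset.range k).image e).piecewise (z k) x = x := fun k =>
    funext fun i => by
      by_cases hi : i ∈ (Finset.range k).image e
      · rw [Finset.piecewise_eq_of_mem _ _ _ hi, hx hi]
      · rw [Finset.piecewise_eq_of_notMem _ _ _ hi]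
  refine ⟨x, hxs 0, mem_iInter.2 fun n => ?_⟩
  simpa [hxfix] using (hs n (hxs (n + 1))).2

variable [∀ i, TopologicalSpace (X i)]

theorem exists_mem_forall_dense_preimage_update (hX : HasCountablePseudobase (∀ i, X i))
    (j : ι) [BaireSpace (X j)] {H : ℕ → Set (∀ i, X i)} (hHo : ∀ m, IsOpen (H m))
    (hHd : ∀ m, Dense (H m)) {V : Set (X j)} (hVo : IsOpen V) (hV : V.Nonempty) :
    ∃ v ∈ V, ∀ m, Dense ((update · j v) ⁻¹' H m) := by
  obtain ⟨W, hWc, hWo, hW⟩ := hX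
  -- `v ∈ A (m, w)` iff the slice `x j = v` meets `H m` above the projection of `w` along `j`.
  let A : ℕ × Set (∀ i, X i) → Set (X j) := fun p =>
    {v | ∃ x, (∃ u, update x j u ∈ p.2) ∧ update x j v ∈ H p.1}
  have hAo : ∀ p, IsOpen (A p) := by
    intro p
    have : A p = ⋃ x ∈ {x | ∃ u, update x j u ∈ p.2}, update x j ⁻¹' H p.1 := by
      ext; simp [A]
    rw [this]
    exact isOpen_biUnion fun x _ => (hHo p.1).preimage (continuous_const.update j continuous_id)
  have hAd : ∀ p ∈ univ ×ˢ W, Dense (A p) := by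
    rintro ⟨m, w⟩ ⟨-, hw⟩
    refine dense_iff_inter_open.2 fun V' hV'o ⟨v', hv'⟩ => ?_
    obtain ⟨y, hy⟩ := (hWo w hw).2
    let O := eval j ⁻¹' V' ∩ ⋃ u, (update · j u) ⁻¹' w
    have hOo : IsOpen O := (hV'o.preimage (continuous_apply j)).inter <| isOpen_iUnion fun u =>
      (hWo w hw).1.preimage (continuous_id.update j continuous_const)
    have hOne : O.Nonempty :=
      ⟨update y j v', by simpa using hv', mem_iUnion.2 ⟨y j, by simpa using hy⟩⟩
    obtain ⟨x, ⟨hxV, hxw⟩, hxH⟩ := (hHd m).inter_open_nonempty O hOo hOne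
    obtain ⟨u, hu⟩ := mem_iUnion.1 hxw
    exact ⟨x j, hxV, x, ⟨u, hu⟩, by simpa using hxH⟩
  obtain ⟨v, hvV, hvA⟩ := (dense_biInter_of_isOpen (fun p _ => hAo p)
    (countable_univ.prod hWc) hAd).inter_open_nonempty V hVo hV
  refine ⟨v, hvV, fun m => dense_iff_inter_open.2 fun O hOo hOne => ?_⟩
  obtain ⟨w, hw, hwO⟩ := hW O hOo hOne
  obtain ⟨x, ⟨u, hu⟩, hx⟩ := mem_iInter₂.1 hvA (m, w) ⟨mem_univ _, hw⟩
  exact ⟨update x j u, hwO hu, by simpa using hx⟩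

theorem continuous_finset_piecewise_right (F : Finset ι) (z : ∀ i, X i) :
    Continuous (F.piecewise z ·) :=
  continuous_pi fun i => by
    by_cases hi : i ∈ F <;> simp [hi, continuous_apply, continuous_const]

variable (G : ℕ → Set (∀ i, X i))

/-- The coordinates in `F` are frozen at the values of `z`: every `G m` stays dense on that slice,
and the open box `pi univ s` meets it. -/
structure FreezeStage (F : Finset ι) (z : ∀ i, X i) (s : ∀ i, Set (X i)) : Prop where
  dense : ∀ m, Dense ((F.piecewise z ·) ⁻¹' G m)
  isOpen : IsOpen (pi univ s)
  exists_fixed : ∃ q ∈ pi univ s, F.piecewise z q = q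

variable {G} {F : Finset ι} {z : ∀ i, X i} {s : ∀ i, Set (X i)}

theorem FreezeStage.exists_shrink (hGo : ∀ m, IsOpen (G m)) (h : FreezeStage G F z s)
    (n : ℕ) :
    ∃ s', FreezeStage G F z s' ∧ pi univ s' ⊆ pi univ s ∩ (F.piecewise z ·) ⁻¹' G n := by
  obtain ⟨q, hq, hqz⟩ := h.exists_fixed
  have hcont := continuous_finset_piecewise_right F z
  obtain ⟨p, hps, hpG⟩ := (h.dense n).inter_open_nonempty _ (h.isOpen.preimage hcont)
    ⟨q, by rwa [mem_preimage, hqz]⟩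
  obtain ⟨s', hs'o, hps', hs'⟩ :=
    exists_pi_univ_subset (h.isOpen.inter ((hGo n).preimage hcont))
      (show F.piecewise z p ∈ _ from ⟨hps, by simpa using hpG⟩)
  exact ⟨s', ⟨h.dense, hs'o, _, hps', by simp⟩, hs'⟩

theorem FreezeStage.exists_freeze (hX : HasCountablePseudobase (∀ i, X i))
    (hGo : ∀ m, IsOpen (G m)) (h : FreezeStage G F z s) (j : ι) [BaireSpace (X j)] :
    ∃ v, FreezeStage G (insert j F) (update z j v) s ∧ (j ∈ F → v = z j) := by
  by_cases hj : j ∈ F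
  · exact ⟨z j, by rwa [update_eq_self, Finset.insert_eq_of_mem hj], fun _ => rfl⟩
  obtain ⟨q, hq, hqz⟩ := h.exists_fixed
  have hcont := continuous_finset_piecewise_right F z
  obtain ⟨v, hv, hvd⟩ := exists_mem_forall_dense_preimage_update hX j
    (fun m => (hGo m).preimage hcont) h.dense
    (h.isOpen.preimage (continuous_const.update j continuous_id))
    ⟨q j, show update q j (q j) ∈ pi univ s by rwa [update_eq_self]⟩
  have hcomp :
      ((insert j F).piecewise (update z j v) ·) = (F.piecewise z ·) ∘ (update · j v) :=
    funext fun x => Finset.piecewise_insert_update hj z x v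
  refine ⟨v, ⟨fun m => ?_, h.isOpen, update q j v, hv, ?_⟩, fun h' => absurd h' hj⟩
  · rw [hcomp, preimage_comp]
    exact hvd m
  · rw [Finset.piecewise_insert_update hj, update_idem,
      ← Finset.update_piecewise_of_notMem _ _ _ hj, hqz]

end Freezing

theorem baireSpace_pi_of_countable {ι : Type*} [Countable ι] {X : ι → Type*}
    [∀ i, TopologicalSpace (X i)] [∀ i, BaireSpace (X i)]
    (h : ∀ i, HasCountablePseudobase (X i)) : BaireSpace (∀ i, X i) := by
  classical
  rcases isEmpty_or_nonempty ι with hι | hι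
  · exact baire_of_finite
  obtain ⟨e, he⟩ := exists_surjective_nat ι
  have hX := HasCountablePseudobase.pi h
  refine baireSpace_of_inter_iInter_nonempty fun G hGo hGd U hU hUne => ?_
  obtain ⟨x₀, hx₀⟩ := hUne
  obtain ⟨s₀, hs₀o, hx₀s, hs₀U⟩ := exists_pi_univ_subset hU hx₀
  have hfree : ∀ x, ((Finset.range 0).image e).piecewise x₀ x = x := fun x =>
    funext fun i => Finset.piecewise_eq_of_notMem _ _ _ (by simp)
  obtain ⟨zs, hzs0, hstage, hnext⟩ := exists_seq_of_forall_exists_succ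
    (P := fun n (p : (∀ i, X i) × ∀ i, Set (X i)) =>
      FreezeStage G ((Finset.range n).image e) p.1 p.2)
    (R := fun n p p' => ∃ v, p'.1 = update p.1 (e n) v ∧
      (e n ∈ (Finset.range n).image e → v = p.1 (e n)) ∧
      pi univ p'.2 ⊆ pi univ p.2 ∩ (((Finset.range n).image e).piecewise p.1 ·) ⁻¹' G n)
    (a := (x₀, s₀))
    ⟨by simpa only [hfree, preimage_id'] using hGd, hs₀o, x₀, hx₀s, hfree x₀⟩
    fun n p hp => by
      obtain ⟨s', hs', hs's⟩ := hp.exists_shrink hGo n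
      obtain ⟨v, hv, hvz⟩ := hs'.exists_freeze hX hGo (e n)
      exact ⟨(update p.1 (e n) v, s'), by simpa [Finset.range_add_one] using hv,
        v, rfl, hvz, hs's⟩
  choose v hzv hvz hs using hnext
  obtain ⟨x, hxs, hxG⟩ := pi_inter_iInter_nonempty_of_freeze he
    (fun n => (hstage n).exists_fixed) (fun n => ⟨v n, hzv n, hvz n⟩) hs
  rw [hzs0] at hxs
  exact ⟨x, hs₀U hxs, hxG⟩

section Reduction

variable {ι : Type*} {X : ι → Type*}

open Classical in
noncomputable def piExtend (S : Set ι) (x₀ : ∀ i, X i) (y : ∀ i : S, X i) : ∀ i, X i :=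
  fun i => if h : i ∈ S then y ⟨i, h⟩ else x₀ i

theorem piExtend_domRestrict_of_mem {S : Set ι} (x₀ x : ∀ i, X i) {i : ι} (hi : i ∈ S) :
    piExtend S x₀ (S.domRestrict x) i = x i := by
  simp [piExtend, hi]

theorem domRestrict_piExtend (S : Set ι) (x₀ : ∀ i, X i) (y : ∀ i : S, X i) :
    S.domRestrict (piExtend S x₀ y) = y :=
  funext fun i => by simp [piExtend]

variable [∀ i, TopologicalSpace (X i)] {B : ∀ i, Set (Set (X i))}

theorem continuous_piExtend (S : Set ι) (x₀ : ∀ i, X i) : Continuous (piExtend S x₀) :=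
  continuous_pi fun i => by
    by_cases h : i ∈ S <;> simp [piExtend, h, continuous_apply, continuous_const]

theorem exists_countable_closed_under_refinement (hB : ∀ i, IsPseudobase (B i))
    (hBc : ∀ i, (B i).Countable) {G : ℕ → Set (∀ i, X i)} (hGo : ∀ m, IsOpen (G m))
    (hGd : ∀ m, Dense (G m)) {S₀ : Set ι} (hS₀ : S₀.Countable) :
    ∃ S, S₀ ⊆ S ∧ S.Countable ∧ ∀ m, ∀ c ∈ boxCodes B S, (sigmaBox c).Nonempty →
      ∃ c' ∈ boxCodes B S, (sigmaBox c').Nonempty ∧ sigmaBox c' ⊆ G m ∩ sigmaBox c := by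
  classical
  have hg : ∀ m (c : Finset (Σ i, Set (X i))), ∃ c' ∈ boxCodes B univ,
      c ∈ boxCodes B univ → (sigmaBox c).Nonempty →
        (sigmaBox c').Nonempty ∧ sigmaBox c' ⊆ G m ∩ sigmaBox c := by
    intro m c
    by_cases hc : c ∈ boxCodes B univ ∧ (sigmaBox c).Nonempty
    · have hco := isOpen_sigmaBox hB hc.1
      obtain ⟨c', hc', hne, hsub⟩ := exists_sigmaBox_subset hB ((hGo m).inter hco)
        (by simpa only [inter_comm] using (hGd m).inter_open_nonempty _ hco hc.2)
      exact ⟨c', hc', fun _ _ => ⟨hne, hsub⟩⟩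
    · exact ⟨∅, by simp [boxCodes], fun h₁ h₂ => absurd ⟨h₁, h₂⟩ hc⟩
  choose g hgB hg using hg
  obtain ⟨S, hS₀S, hSc, hS⟩ := exists_countable_superset_closed
    (fun F => ⋃ m, ⋃ c ∈ boxCodes B (F : Set ι), ((g m c).image Sigma.fst : Set ι))
    (fun F => countable_iUnion fun m => (countable_boxCodes hBc F.countable_toSet).biUnion
      fun c _ => (Finset.finite_toSet _).countable) hS₀
  refine ⟨S, hS₀S, hSc, fun m c hc hne => ⟨g m c, fun p hp => ⟨?_, (hgB m c p hp).2⟩,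
    hg m c (fun p hp => ⟨mem_univ _, (hc p hp).2⟩) hne⟩⟩
  refine hS (c.image Sigma.fst) (fun i hi => by
    obtain ⟨p, hp, rfl⟩ := Finset.mem_image.1 hi
    exact (hc p hp).1) ?_
  exact mem_iUnion.2 ⟨m, mem_iUnion₂.2 ⟨c, fun q hq => ⟨Finset.mem_image_of_mem _ hq,
    (hc q hq).2⟩, Finset.mem_coe.2 (Finset.mem_image_of_mem _ hp)⟩⟩

open Classical in
theorem dense_preimage_piExtend (hB : ∀ i, IsPseudobase (B i)) {S : Set ι}
    {G : Set (∀ i, X i)}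
    (hS : ∀ c ∈ boxCodes B S, (sigmaBox c).Nonempty →
      ∃ c' ∈ boxCodes B S, (sigmaBox c').Nonempty ∧ sigmaBox c' ⊆ G ∩ sigmaBox c)
    (x₀ : ∀ i, X i) : Dense (piExtend S x₀ ⁻¹' G) := by
  refine dense_iff_inter_open.2 fun V hVo ⟨y, hy⟩ => ?_
  have hyV : piExtend S x₀ y ∈ S.domRestrict ⁻¹' V := by
    rwa [mem_preimage, domRestrict_piExtend]
  obtain ⟨c, hc, hcne, hcV⟩ :=
    exists_sigmaBox_subset hB (hVo.preimage (Pi.continuous_domRestrict S)) ⟨_, hyV⟩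
  have hcS : c.filter (·.1 ∈ S) ∈ boxCodes B S := fun p hp =>
    ⟨(Finset.mem_filter.1 hp).2, (hc p (Finset.mem_filter.1 hp).1).2⟩
  obtain ⟨c', hc'S, ⟨x, hx⟩, hc'⟩ :=
    hS _ hcS (hcne.mono (sigmaBox_anti (Finset.filter_subset _ _)))
  refine ⟨S.domRestrict x, sigmaBox_filter_subset_preimage_domRestrict hcne hcV (hc' hx).2, ?_⟩
  exact (hc' (mem_sigmaBox_of_eqOn hc'S
    (fun i hi => (piExtend_domRestrict_of_mem x₀ x hi).symm) hx)).1

theorem baireSpace_pi [∀ i, BaireSpace (X i)] (h : ∀ i, HasCountablePseudobase (X i)) :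
    BaireSpace (∀ i, X i) := by
  classical
  choose B hBc hB using h
  refine baireSpace_of_inter_iInter_nonempty fun G hGo hGd U hU hUne => ?_
  obtain ⟨c₀, hc₀, ⟨x₀, hx₀⟩, hc₀U⟩ := exists_sigmaBox_subset hB hU hUne
  obtain ⟨S, hS₀, hSc, hS⟩ := exists_countable_closed_under_refinement hB hBc hGo hGd
    (c₀.image Sigma.fst).countable_toSet
  have : Countable S := hSc.to_subtype
  have : BaireSpace (∀ i : S, X i) := baireSpace_pi_of_countable fun i => ⟨B i, hBc i, hB i⟩
  have hc₀S : c₀ ∈ boxCodes B S := fun p hp =>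
    ⟨hS₀ (Finset.mem_image_of_mem _ hp), (hc₀ p hp).2⟩
  have hcont := continuous_piExtend S x₀
  obtain ⟨y, hyc₀, hyG⟩ := (dense_iInter_of_isOpen_nat (fun m => (hGo m).preimage hcont)
    fun m => dense_preimage_piExtend hB (hS m) x₀).inter_open_nonempty _
    ((isOpen_sigmaBox hB hc₀).preimage hcont) ⟨S.domRestrict x₀, mem_sigmaBox_of_eqOn hc₀S
      (fun i hi => (piExtend_domRestrict_of_mem x₀ x₀ hi).symm) hx₀⟩
  exact ⟨piExtend S x₀ y, hc₀U hyc₀, by simpa using hyG⟩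

end Reduction

/-- Oxtoby's theorem: a product of Baire spaces, each having a countable
pseudobase, is Baire. -/
theorem oxtoby_product_baire {ι : Type*} (X : ι → Type*)
    [∀ i, TopologicalSpace (X i)] [∀ i, BaireSpace (X i)]
    (hpb : ∀ i, ∃ B : Set (Set (X i)), B.Countable ∧
      (∀ b ∈ B, IsOpen b ∧ b.Nonempty) ∧
      ∀ U : Set (X i), IsOpen U → U.Nonempty → ∃ b ∈ B, b ⊆ U) :
    BaireSpace (∀ i, X i) :=
  baireSpace_pi hpb
end

section
/- If a topological space X is not a Baire space, then the countable power X^ω is meager in itself. -/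
/-!
If `X` is not Baire, it contains a nonempty open meagre set `U`. Then `X^ω` is covered by the
sets `{g | g n ∈ U}`, each meagre as the preimage of `U` under the continuous open projection
to the `n`-th coordinate, together with their complement `∏ Uᶜ`. Since `U` is open and nonempty,
`Uᶜ` is closed and not dense, and an infinite product of such sets has empty interior: a basic
open set constrains only finitely many coordinates.
-/

open Set Function

lemma exists_nonempty_isOpen_isMeagre_of_not_baireSpace {X : Type*} [TopologicalSpace X]
    (h : ¬ BaireSpace X) : ∃ U : Set X, IsOpen U ∧ U.Nonempty ∧ IsMeagre U := by
  by_contra! hU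
  refine h ⟨fun f hfo hfd => dense_iff_inter_open.2 fun V hVo hVne => ?_⟩
  have hmeagre : IsMeagre (⋂ n, f n)ᶜ := by
    rw [IsMeagre, compl_compl]
    exact countable_iInter_mem.2 fun n => residual_of_dense_open (hfo n) (hfd n)
  rw [← not_disjoint_iff_nonempty_inter]
  exact fun hdisj => hU V hVo hVne (hmeagre.mono hdisj.subset_compl_right)

section InfiniteProduct

variable {ι : Type*} [Infinite ι] {X : ι → Type*} [∀ i, TopologicalSpace (X i)]

lemma interior_univ_pi_eq_empty {t : ∀ i, Set (X i)} (ht : ∀ i, t i ≠ univ) :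
    interior (univ.pi t) = ∅ := by
  classical
  refine eq_empty_of_forall_notMem fun g hg => ?_
  obtain ⟨I, u, hgu, hsub⟩ := isOpen_pi_iff.1 isOpen_interior g hg
  obtain ⟨i, hi⟩ := I.exists_notMem
  obtain ⟨x, hx⟩ := (ne_univ_iff_exists_notMem _).1 (ht i)
  have hupd : update g i x ∈ (I : Set ι).pi u := fun j hj => by
    rw [update_of_ne (ne_of_mem_of_not_mem hj hi)]
    exact (hgu j hj).2
  exact hx (by simpa using interior_subset (hsub hupd) i (mem_univ i))

lemma isNowhereDense_univ_pi {s : ∀ i, Set (X i)} (hs : ∀ i, ¬ Dense (s i)) :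
    IsNowhereDense (univ.pi s) := by
  rw [IsNowhereDense, closure_pi_set]
  exact interior_univ_pi_eq_empty fun i => (hs i <| dense_iff_closure_eq.2 ·)

theorem isMeagre_univ_pi_of_not_baireSpace [Countable ι] (h : ∀ i, ¬ BaireSpace (X i)) :
    IsMeagre (univ : Set (∀ i, X i)) := by
  choose U hUo hUne hU using fun i => exists_nonempty_isOpen_isMeagre_of_not_baireSpace (h i)
  have hcoord : IsMeagre (⋃ i, eval i ⁻¹' U i) := isMeagre_iUnion fun i =>
    (hU i).preimage_of_isOpenMap (continuous_apply i) (isOpenMap_eval i)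
  have hrest : IsMeagre (⋃ i, eval i ⁻¹' U i)ᶜ := by
    have hpi : (⋃ i, eval i ⁻¹' U i)ᶜ = univ.pi fun i => (U i)ᶜ := by ext; simp
    rw [hpi]
    refine (isNowhereDense_univ_pi fun i hd => (hUne i).ne_empty ?_).isMeagre
    rwa [← (hUo i).interior_eq, interior_eq_empty_iff_dense_compl]
  rw [← union_compl_self (⋃ i, eval i ⁻¹' U i)]
  exact hcoord.union hrest

end InfiniteProduct

/-- If `X` is not a Baire space, then `X^ω` is meager in itself. -/
theorem not_baire_power_meager {X : Type*} [TopologicalSpace X]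
    (h : ¬ BaireSpace X) :
    IsMeagre (Set.univ : Set (ℕ → X)) :=
  isMeagre_univ_pi_of_not_baireSpace fun _ => h
end

section
/- Let X be a first-countable zero-dimensional T1 topological space. If X is h-homogeneous (every non-empty clopen subspace of X is homeomorphic to X), then X is homogeneous (for every pair of points x, y ∈ X there is a homeomorphism of X onto itself mapping x to y). -/
/-- A first-countable zero-dimensional T1 space which is h-homogeneous
(every non-empty clopen subspace is homeomorphic to the whole space)
is homogeneous. -/
theorem h_homogeneous_implies_homogeneous {X : Type*} [TopologicalSpace X]
    [T1Space X] [FirstCountableTopology X]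
    (hzd : TopologicalSpace.IsTopologicalBasis {s : Set X | IsClopen s})
    (hh : ∀ C : Set X, IsClopen C → C.Nonempty → Nonempty (C ≃ₜ X)) :
    ∀ x y : X, ∃ f : X ≃ₜ X, f x = y := by
  classical
  intro x y
  by_cases hxy : x = y
  · exact ⟨Homeomorph.refl X, hxy⟩
  -- no isolated points
  have hne : ∀ C : Set X, IsClopen C → ∀ z ∈ C, ∃ w ∈ C, w ≠ z := by
    intro C hC z hz
    by_contra hcon
    push_neg at hcon
    have hCz : C = {z} := Set.eq_singleton_iff_unique_mem.mpr ⟨hz, fun w hw => hcon w hw⟩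
    obtain ⟨e⟩ := hh C hC ⟨z, hz⟩
    have hsub : Subsingleton C := by rw [hCz]; infer_instance
    have : Subsingleton X := e.toEquiv.symm.subsingleton
    exact hxy (Subsingleton.elim x y)
  -- clopen neighborhoods
  have clnbhd : ∀ (a : X), ∀ s ∈ nhds a, ∃ t, IsClopen t ∧ a ∈ t ∧ t ⊆ s := by
    intro a s hs
    obtain ⟨t, ht, hat, hts⟩ := hzd.mem_nhds_iff.mp hs
    exact ⟨t, ht, hat, hts⟩
  -- chains of clopen sets
  have chain : ∀ (a : X) (A : Set X), IsClopen A → a ∈ A →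
      ∃ W : ℕ → Set X, (∀ n, IsClopen (W n)) ∧ (∀ n, a ∈ W n) ∧
        (∀ n, W (n+1) ⊆ W n) ∧ W 0 ⊆ A ∧ (∀ n, (W n \ W (n+1)).Nonempty) ∧
        (∀ s ∈ nhds a, ∃ n, W n ⊆ s) := by
    intro a A hA haA
    obtain ⟨U, hU⟩ := (nhds a).exists_antitone_basis
    have step : ∀ C : Set X, IsClopen C → a ∈ C → ∀ n : ℕ,
        ∃ D : Set X, IsClopen D ∧ a ∈ D ∧ D ⊆ C ∧ D ⊆ U n ∧ (C \ D).Nonempty := by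
      intro C hC haC n
      obtain ⟨w, hwC, hwa⟩ := hne C hC a haC
      have hs : C ∩ U n ∩ {w}ᶜ ∈ nhds a := by
        refine Filter.inter_mem (Filter.inter_mem (hC.isOpen.mem_nhds haC)
          (hU.toHasBasis.mem_of_mem trivial)) ?_
        exact isOpen_compl_singleton.mem_nhds (by simpa using hwa.symm)
      obtain ⟨t, ht, hat, hts⟩ := clnbhd a _ hs
      refine ⟨t, ht, hat, fun z hz => (hts hz).1.1, fun z hz => (hts hz).1.2,
        ⟨w, hwC, fun hw => (hts hw).2 rfl⟩⟩
    choose! D hD1 hD2 hD3 hD4 hD5 using step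
    set W : ℕ → Set X := fun n => Nat.rec (D A 0) (fun n Wn => D Wn (n+1)) n with hWdef
    have hW0 : W 0 = D A 0 := rfl
    have hWsucc : ∀ n, W (n+1) = D (W n) (n+1) := fun n => rfl
    have key : ∀ n, IsClopen (W n) ∧ a ∈ W n := by
      intro n
      induction n with
      | zero => exact ⟨hD1 A hA haA 0, hD2 A hA haA 0⟩
      | succ n ih =>
        rw [hWsucc]
        exact ⟨hD1 _ ih.1 ih.2 (n+1), hD2 _ ih.1 ih.2 (n+1)⟩
    have hWU : ∀ n, W n ⊆ U n := by
      intro n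
      cases n with
      | zero => exact hD4 A hA haA 0
      | succ n => rw [hWsucc]; exact hD4 _ (key n).1 (key n).2 (n+1)
    refine ⟨W, fun n => (key n).1, fun n => (key n).2, ?_, hD3 A hA haA 0, ?_, ?_⟩
    · intro n
      rw [hWsucc]
      exact hD3 _ (key n).1 (key n).2 (n+1)
    · intro n
      rw [hWsucc]
      exact hD5 _ (key n).1 (key n).2 (n+1)
    · intro s hs
      obtain ⟨n, -, hn⟩ := hU.toHasBasis.mem_iff.mp hs
      exact ⟨n, (hWU n).trans hn⟩
  -- disjoint clopen sets around x and y
  obtain ⟨A, hA, hxA, hAy⟩ := clnbhd x {y}ᶜ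
    (isOpen_compl_singleton.mem_nhds (by simpa using hxy))
  have hyA : y ∉ A := fun h => hAy h rfl
  obtain ⟨B, hB, hyB, hBA⟩ := clnbhd y Aᶜ (hA.compl.isOpen.mem_nhds hyA)
  obtain ⟨W, hWcl, hxW, hWmono, hWA, hWne, hWbas⟩ := chain x A hA hxA
  obtain ⟨Z, hZcl, hyZ, hZmono, hZB, hZne, hZbas⟩ := chain y B hB hyB
  have hWanti : Antitone W := antitone_nat_of_succ_le hWmono
  have hZanti : Antitone Z := antitone_nat_of_succ_le hZmono
  set R : ℕ → Set X := fun n => W n \ W (n+1) with hRdef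
  set S : ℕ → Set X := fun n => Z n \ Z (n+1) with hSdef
  have hRcl : ∀ n, IsClopen (R n) := fun n => (hWcl n).diff (hWcl (n+1))
  have hScl : ∀ n, IsClopen (S n) := fun n => (hZcl n).diff (hZcl (n+1))
  have e : ∀ n, (R n ≃ₜ S n) := fun n =>
    (hh (R n) (hRcl n) (hWne n)).some.trans ((hh (S n) (hScl n) (hZne n)).some.symm)
  -- basic membership facts
  have hRW0 : ∀ n, R n ⊆ W 0 := fun n z hz => hWanti (Nat.zero_le n) hz.1
  have hSZ0 : ∀ n, S n ⊆ Z 0 := fun n z hz => hZanti (Nat.zero_le n) hz.1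
  have hxRn : ∀ n, x ∉ R n := fun n h => h.2 (hxW (n+1))
  have hySn : ∀ n, y ∉ S n := fun n h => h.2 (hyZ (n+1))
  have hyW0 : y ∉ W 0 := fun h => hAy (hWA h) rfl
  have hxZ0 : x ∉ Z 0 := fun h => hBA (hZB h) hxA
  have hdisj : ∀ z, z ∈ W 0 → z ∉ Z 0 := fun z hW hZ => hBA (hZB hZ) (hWA hW)
  have uniqR : ∀ {z : X} {a b : ℕ}, z ∈ R a → z ∈ R b → a = b := by
    intro z a b ha hb
    rcases lt_trichotomy a b with h | h | h
    · exact absurd (hWanti (Nat.succ_le_of_lt h) hb.1) ha.2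
    · exact h
    · exact absurd (hWanti (Nat.succ_le_of_lt h) ha.1) hb.2
  have uniqS : ∀ {z : X} {a b : ℕ}, z ∈ S a → z ∈ S b → a = b := by
    intro z a b ha hb
    rcases lt_trichotomy a b with h | h | h
    · exact absurd (hZanti (Nat.succ_le_of_lt h) hb.1) ha.2
    · exact h
    · exact absurd (hZanti (Nat.succ_le_of_lt h) ha.1) hb.2
  have exR : ∀ z ∈ W 0, z ≠ x → ∃ n, z ∈ R n := by
    intro z hz hzx
    have h1 : ∃ m, z ∉ W m := by
      obtain ⟨n, hn⟩ := hWbas {z}ᶜ (isOpen_compl_singleton.mem_nhds (by simpa using hzx.symm))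
      exact ⟨n, fun h => hn h rfl⟩
    have hm0 : Nat.find h1 ≠ 0 := fun h => (Nat.find_spec h1) (h ▸ hz)
    obtain ⟨m, hm⟩ := Nat.exists_eq_succ_of_ne_zero hm0
    refine ⟨m, ?_, ?_⟩
    · have := Nat.find_min h1 (m := m) (by omega)
      exact not_not.mp this
    · have := Nat.find_spec h1
      rwa [hm] at this
  have exS : ∀ z ∈ Z 0, z ≠ y → ∃ n, z ∈ S n := by
    intro z hz hzy
    have h1 : ∃ m, z ∉ Z m := by
      obtain ⟨n, hn⟩ := hZbas {z}ᶜ (isOpen_compl_singleton.mem_nhds (by simpa using hzy.symm))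
      exact ⟨n, fun h => hn h rfl⟩
    have hm0 : Nat.find h1 ≠ 0 := fun h => (Nat.find_spec h1) (h ▸ hz)
    obtain ⟨m, hm⟩ := Nat.exists_eq_succ_of_ne_zero hm0
    refine ⟨m, ?_, ?_⟩
    · have := Nat.find_min h1 (m := m) (by omega)
      exact not_not.mp this
    · have := Nat.find_spec h1
      rwa [hm] at this
  -- the function
  set f : X → X := fun z =>
    if z = x then y
    else if z = y then x
    else if h : ∃ n, z ∈ R n then ((e h.choose) ⟨z, h.choose_spec⟩ : X)
    else if h : ∃ n, z ∈ S n then ((e h.choose).symm ⟨z, h.choose_spec⟩ : X)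
    else z with hfdef
  have hfx : f x = y := by simp [hfdef]
  have hfy : f y = x := by
    show (if y = x then y else if y = y then x else _) = x
    rw [if_neg (Ne.symm hxy), if_pos rfl]
  have hfR : ∀ n z (hz : z ∈ R n), f z = ((e n) ⟨z, hz⟩ : X) := by
    intro n z hz
    have hzx : z ≠ x := fun h => hxRn n (h ▸ hz)
    have hzy : z ≠ y := fun h => hyW0 (hRW0 n (h ▸ hz))
    have hex : ∃ m, z ∈ R m := ⟨n, hz⟩
    show (if z = x then y else if z = y then x else if h : ∃ n, z ∈ R n then _ else _) = _
    rw [if_neg hzx, if_neg hzy, dif_pos hex]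
    have hc : hex.choose = n := uniqR hex.choose_spec hz
    subst hc
    rfl
  have hfS : ∀ n z (hz : z ∈ S n), f z = ((e n).symm ⟨z, hz⟩ : X) := by
    intro n z hz
    have hzx : z ≠ x := fun h => hxZ0 (hSZ0 n (h ▸ hz))
    have hzy : z ≠ y := fun h => hySn n (h ▸ hz)
    have hnR : ¬ ∃ m, z ∈ R m := by
      rintro ⟨m, hm⟩
      exact hdisj z (hRW0 m hm) (hSZ0 n hz)
    have hex : ∃ m, z ∈ S m := ⟨n, hz⟩
    show (if z = x then y else if z = y then x else if h : ∃ n, z ∈ R n then _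
      else if h : ∃ n, z ∈ S n then _ else _) = _
    rw [if_neg hzx, if_neg hzy, dif_neg hnR, dif_pos hex]
    have hc : hex.choose = n := uniqS hex.choose_spec hz
    subst hc
    rfl
  have hfid : ∀ z, z ∉ W 0 → z ∉ Z 0 → f z = z := by
    intro z hzW hzZ
    have hzx : z ≠ x := fun h => hzW (h ▸ hxW 0)
    have hzy : z ≠ y := fun h => hzZ (h ▸ hyZ 0)
    have hnR : ¬ ∃ m, z ∈ R m := fun ⟨m, hm⟩ => hzW (hRW0 m hm)
    have hnS : ¬ ∃ m, z ∈ S m := fun ⟨m, hm⟩ => hzZ (hSZ0 m hm)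
    show (if z = x then y else if z = y then x else if h : ∃ n, z ∈ R n then _
      else if h : ∃ n, z ∈ S n then _ else z) = z
    rw [if_neg hzx, if_neg hzy, dif_neg hnR, dif_neg hnS]
  have hfRmem : ∀ n z (hz : z ∈ R n), f z ∈ S n := by
    intro n z hz; rw [hfR n z hz]; exact ((e n) ⟨z, hz⟩).2
  have hfSmem : ∀ n z (hz : z ∈ S n), f z ∈ R n := by
    intro n z hz; rw [hfS n z hz]; exact ((e n).symm ⟨z, hz⟩).2
  -- involution
  have hff : ∀ z, f (f z) = z := by
    intro z
    by_cases hzx : z = x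
    · rw [hzx, hfx, hfy]
    by_cases hzy : z = y
    · rw [hzy, hfy, hfx]
    by_cases hzR : ∃ n, z ∈ R n
    · obtain ⟨n, hz⟩ := hzR
      have hw : ((e n) ⟨z, hz⟩ : X) ∈ S n := ((e n) ⟨z, hz⟩).2
      rw [hfR n z hz, hfS n _ hw]
      have : (⟨((e n) ⟨z, hz⟩ : X), hw⟩ : S n) = (e n) ⟨z, hz⟩ := rfl
      rw [this, Homeomorph.symm_apply_apply]
    by_cases hzS : ∃ n, z ∈ S n
    · obtain ⟨n, hz⟩ := hzS
      have hw : ((e n).symm ⟨z, hz⟩ : X) ∈ R n := ((e n).symm ⟨z, hz⟩).2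
      rw [hfS n z hz, hfR n _ hw]
      have : (⟨((e n).symm ⟨z, hz⟩ : X), hw⟩ : R n) = (e n).symm ⟨z, hz⟩ := rfl
      rw [this, Homeomorph.apply_symm_apply]
    · have hzW : z ∉ W 0 := fun h => hzR (exR z h hzx)
      have hzZ : z ∉ Z 0 := fun h => hzS (exS z h hzy)
      rw [hfid z hzW hzZ, hfid z hzW hzZ]
  -- continuity
  have loc : ∀ (s : Set X) (z : X), IsOpen s → z ∈ s → Continuous (s.restrict f) →
      ContinuousAt f z := by
    intro s z hs hzs hc
    exact (continuousOn_iff_continuous_restrict.mpr hc).continuousAt (hs.mem_nhds hzs)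
  have hcont : Continuous f := by
    rw [continuous_iff_continuousAt]
    intro z
    by_cases hzx : z = x
    · subst hzx
      rw [ContinuousAt, hfx, Filter.tendsto_def]
      intro s hs
      obtain ⟨n, hn⟩ := hZbas s hs
      refine Filter.mem_of_superset ((hWcl n).isOpen.mem_nhds (hxW n)) ?_
      intro w hw
      refine Set.mem_preimage.mpr (hn ?_)
      by_cases hwz : w = z
      · rw [hwz, hfx]; exact hyZ n
      · obtain ⟨m, hm⟩ := exR w (hWanti (Nat.zero_le n) hw) hwz
        have hnm : n ≤ m := by
          by_contra hlt
          exact hm.2 (hWanti (Nat.succ_le_of_lt (by omega)) hw)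
        exact hZanti hnm (hfRmem m w hm).1
    by_cases hzy : z = y
    · subst hzy
      rw [ContinuousAt, hfy, Filter.tendsto_def]
      intro s hs
      obtain ⟨n, hn⟩ := hWbas s hs
      refine Filter.mem_of_superset ((hZcl n).isOpen.mem_nhds (hyZ n)) ?_
      intro w hw
      refine Set.mem_preimage.mpr (hn ?_)
      by_cases hwz : w = z
      · rw [hwz, hfy]; exact hxW n
      · obtain ⟨m, hm⟩ := exS w (hZanti (Nat.zero_le n) hw) hwz
        have hnm : n ≤ m := by
          by_contra hlt
          exact hm.2 (hZanti (Nat.succ_le_of_lt (by omega)) hw)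
        exact hWanti hnm (hfSmem m w hm).1
    by_cases hzR : ∃ n, z ∈ R n
    · obtain ⟨n, hz⟩ := hzR
      refine loc (R n) z ((hWcl n).isOpen.sdiff (hWcl (n+1)).isClosed) hz ?_
      have : (R n).restrict f = fun u => ((e n) u : X) := by
        funext u
        exact hfR n u u.2
      rw [this]
      exact continuous_subtype_val.comp (e n).continuous
    by_cases hzS : ∃ n, z ∈ S n
    · obtain ⟨n, hz⟩ := hzS
      refine loc (S n) z ((hZcl n).isOpen.sdiff (hZcl (n+1)).isClosed) hz ?_
      have : (S n).restrict f = fun u => ((e n).symm u : X) := by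
        funext u
        exact hfS n u u.2
      rw [this]
      exact continuous_subtype_val.comp (e n).symm.continuous
    · have hzW : z ∉ W 0 := fun h => hzR (exR z h hzx)
      have hzZ : z ∉ Z 0 := fun h => hzS (exS z h hzy)
      refine loc (W 0 ∪ Z 0)ᶜ z ((hWcl 0).union (hZcl 0)).compl.isOpen
        (by simp [hzW, hzZ]) ?_
      have : ((W 0 ∪ Z 0)ᶜ).restrict f = Subtype.val := by
        funext u
        have hu := u.2
        rw [Set.mem_compl_iff, Set.mem_union] at hu
        push_neg at hu
        exact hfid u hu.1 hu.2
      rw [this]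
      exact continuous_subtype_val
  exact ⟨⟨⟨f, f, hff, hff⟩, hcont, hcont⟩, hfx⟩
end

section
/- Let Z ⊆ 2^ω be a nowhere meager subset of the Cantor space (i.e., Z ∩ U is non-meager in 2^ω for every non-empty open U ⊆ 2^ω). Then Z is dense in 2^ω and Z is a Baire space, and consequently Z^ω is a Baire space. -/
/-!
Meagre subsets of a subspace are meagre in the ambient space, so a space embedded onto a nowhere
meagre set is Baire; it remains to see that `Z^ω` is nowhere meagre in `(2^ω)^ω`. Given closed
nowhere dense sets `F m` covering `Z^ω ∩ U`, choose the coordinates `z₀, z₁, … ∈ Z` one at a time,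
together with shrinking basic open boxes for the remaining coordinates. By the easy half of the
Kuratowski–Ulam theorem, the `z` for which some section of some `F m` over `z₀ … zₙ₋₁ z` fails to
be nowhere dense form a meagre set, so `zₙ` can be taken outside it; the box of step `n` is shrunk
off the section of `F n`. The resulting point lies in `Z^ω ∩ U` but in no `F m`.
-/

open Set Topology TopologicalSpace

variable {X Y : Type*} [TopologicalSpace X] [TopologicalSpace Y]

def IsNowhereMeagre (s : Set X) : Prop :=
  ∀ U : Set X, IsOpen U → U.Nonempty → ¬IsMeagre (s ∩ U)

theorem IsNowhereMeagre.dense {s : Set X} (h : IsNowhereMeagre s) : Dense s :=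
  dense_iff_inter_open.2 fun U hU hne => by
    simpa only [inter_comm] using nonempty_of_not_isMeagre (h U hU hne)

theorem BaireSpace.of_forall_not_isMeagre
    (h : ∀ U : Set X, IsOpen U → U.Nonempty → ¬IsMeagre U) : BaireSpace X where
  baire_property f hfo hfd := by
    have hres : ⋂ n, f n ∈ residual X :=
      countable_iInter_mem.2 fun n => residual_of_dense_open (hfo n) (hfd n)
    refine dense_iff_inter_open.2 fun U hU hne => ?_
    by_contra hempty
    exact h U hU hne (Filter.mem_of_superset hres fun x hx hxU => hempty ⟨x, hxU, hx⟩)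

theorem IsNowhereMeagre.baireSpace_of_isInducing {f : Y → X} (hf : IsInducing f)
    (h : IsNowhereMeagre (range f)) : BaireSpace Y :=
  .of_forall_not_isMeagre fun V hV ⟨y, hy⟩ hV_meagre => by
    obtain ⟨U, hU, rfl⟩ := hf.isOpen_iff.1 hV
    have := hf.isMeagre_image hV_meagre
    rw [image_preimage_eq_range_inter] at this
    exact h U hU ⟨f y, hy⟩ this

theorem IsMeagre.exists_closed_isNowhereDense_cover {s : Set X} (hs : IsMeagre s) :
    ∃ F : ℕ → Set X, (∀ m, IsClosed (F m) ∧ IsNowhereDense (F m)) ∧ s ⊆ ⋃ m, F m := by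
  obtain ⟨S, hS, hS_count, hsS⟩ := isMeagre_iff_countable_union_isNowhereDense.1 hs
  obtain ⟨f, hf⟩ := (hS_count.insert ∅).exists_eq_range (insert_nonempty ∅ S)
  have hf_nd (m : ℕ) : IsNowhereDense (f m) := by
    rcases (hf ▸ mem_range_self m : f m ∈ insert ∅ S) with h | h
    · exact h ▸ isNowhereDense_empty
    · exact hS _ h
  refine ⟨fun m => closure (f m), fun m => ⟨isClosed_closure, (hf_nd m).closure⟩, ?_⟩
  refine hsS.trans (sUnion_subset fun t ht => ?_)
  obtain ⟨m, rfl⟩ : t ∈ range f := hf ▸ mem_insert_of_mem ∅ ht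
  exact subset_closure.trans (subset_iUnion (fun m => closure (f m)) m)

theorem IsNowhereDense.preimage_homeomorph (e : X ≃ₜ Y) {s : Set Y} (hs : IsNowhereDense s) :
    IsNowhereDense (e ⁻¹' s) := by
  rw [← e.image_symm]
  exact e.symm.isInducing.isNowhereDense_image hs

/-- The easy half of the Kuratowski–Ulam theorem, for closed sets. -/
theorem IsClosed.isMeagre_setOf_not_isNowhereDense_prodMk_preimage [SecondCountableTopology Y]
    {T : Set (X × Y)} (hT : IsClosed T) (hT_nd : IsNowhereDense T) :
    IsMeagre {x | ¬IsNowhereDense (Prod.mk x ⁻¹' T)} := by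
  set A : Set Y → Set X := fun V => {x | V ⊆ Prod.mk x ⁻¹' T}
  have hA_closed (V : Set Y) : IsClosed (A V) := by
    have : A V = ⋂ y ∈ V, (fun x => (x, y)) ⁻¹' T := by ext; simp [A, subset_def]
    rw [this]
    exact isClosed_biInter fun y _ => hT.preimage (by fun_prop)
  have hA_nd (V : Set Y) (hV : IsOpen V) (hV_ne : V.Nonempty) : IsNowhereDense (A V) := by
    rw [(hA_closed V).isNowhereDense_iff, ← not_nonempty_iff_eq_empty]
    rintro ⟨x, hx⟩
    obtain ⟨y, hy⟩ := hV_ne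
    have hsub : interior (A V) ×ˢ V ⊆ T := fun p hp => interior_subset hp.1 hp.2
    have := (isOpen_interior.prod hV).subset_interior_iff.2 hsub
    rw [hT.isNowhereDense_iff.1 hT_nd] at this
    exact this (mk_mem_prod hx hy)
  have hcover : {x | ¬IsNowhereDense (Prod.mk x ⁻¹' T)} ⊆ ⋃ V ∈ countableBasis Y, A V := by
    intro x hx
    rw [mem_ofPred_eq, (hT.preimage (by fun_prop)).isNowhereDense_iff,
      ← Ne, ← nonempty_iff_ne_empty] at hx
    obtain ⟨y, hy⟩ := hx
    obtain ⟨V, hV, -, hVsub⟩ :=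
      (isBasis_countableBasis Y).exists_subset_of_mem_open hy isOpen_interior
    exact mem_biUnion hV (hVsub.trans interior_subset)
  refine (isMeagre_biUnion (countable_countableBasis Y) fun V hV => ?_).mono hcover
  exact (hA_nd V ((isBasis_countableBasis Y).isOpen hV)
    (nonempty_iff_ne_empty.2 fun h => empty_notMem_countableBasis Y (h ▸ hV))).isMeagre

section Box

variable {ι : Type*} {π : ι → Type*} [∀ i, TopologicalSpace (π i)]

def IsBox (u : ∀ i, Set (π i)) : Prop :=
  (∀ i, IsOpen (u i)) ∧ {i | u i ≠ univ}.Finite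

theorem IsBox.isOpen_pi {u : ∀ i, Set (π i)} (hu : IsBox u) : IsOpen (univ.pi u) := by
  have : univ.pi u = {i | u i ≠ univ}.pi u := by
    ext x
    refine ⟨fun hx i _ => hx i trivial, fun hx i _ => ?_⟩
    by_cases hi : u i = univ
    · exact hi ▸ trivial
    · exact hx i hi
  rw [this]
  exact isOpen_set_pi hu.2 fun i _ => hu.1 i

theorem exists_isBox_subset {W : Set (∀ i, π i)} (hW : IsOpen W) {x : ∀ i, π i} (hx : x ∈ W) :
    ∃ u : ∀ i, Set (π i), IsBox u ∧ x ∈ univ.pi u ∧ univ.pi u ⊆ W := by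
  classical
  obtain ⟨I, u, hu, hIW⟩ := isOpen_pi_iff.1 hW x hx
  refine ⟨fun i => if i ∈ (I : Set ι) then u i else univ,
    ⟨fun i => ?_, I.finite_toSet.subset fun i hi => ?_⟩, fun i _ => ?_, ?_⟩
  · dsimp only
    split_ifs with h
    exacts [(hu i h).1, isOpen_univ]
  · by_contra h
    exact hi (if_neg h)
  · dsimp only
    split_ifs with h
    exacts [(hu i h).2, trivial]
  · rwa [univ_pi_ite]

end Box

theorem IsBox.comp_succ {u : ℕ → Set X} (hu : IsBox u) : IsBox fun j => u (j + 1) :=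
  ⟨fun j => hu.1 (j + 1), hu.2.preimage (add_left_injective 1).injOn⟩

variable (X) in
def consHomeomorph : X × (ℕ → X) ≃ₜ (ℕ → X) where
  toFun p n := Nat.casesOn n p.1 p.2
  invFun x := (x 0, fun n => x (n + 1))
  left_inv _ := rfl
  right_inv x := funext fun n => by cases n <;> rfl
  continuous_toFun := continuous_pi fun n => by cases n <;> fun_prop
  continuous_invFun := by fun_prop

theorem consHomeomorph_shift (x : ℕ → X) (n : ℕ) :
    consHomeomorph X (x n, fun j => x (n + 1 + j)) = fun j => x (n + j) :=
  funext fun j => by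
    cases j with
    | zero => rfl
    | succ j => exact congrArg x (by omega)

/-- The state of the diagonal construction once a prefix `z₀ … zₖ₋₁` has been chosen: `box`
constrains the remaining coordinates and `bad m` is the section of the `m`-th closed nowhere dense
set over the prefix. -/
structure PiStage (X : Type*) [TopologicalSpace X] where
  box : ℕ → Set X
  isBox_box : IsBox box
  nonempty_box : (univ.pi box).Nonempty
  bad : ℕ → Set (ℕ → X)
  isClosed_bad : ∀ m, IsClosed (bad m)
  isNowhereDense_bad : ∀ m, IsNowhereDense (bad m)

theorem PiStage.exists_next [SecondCountableTopology X] {Z : Set X} (hZ : IsNowhereMeagre Z)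
    (S : PiStage X) (n : ℕ) :
    ∃ z ∈ Z, ∃ T : PiStage X, z ∈ S.box 0 ∧ (∀ j, T.box j ⊆ S.box (j + 1)) ∧
      (∀ m, T.bad m = Prod.mk z ⁻¹' (consHomeomorph X ⁻¹' S.bad m)) ∧
      Disjoint (univ.pi T.box) (T.bad n) := by
  set e := consHomeomorph X
  obtain ⟨w, hw⟩ : (univ.pi S.box \ S.bad n).Nonempty :=
    (isClosed_isNowhereDense_iff_compl.1 ⟨S.isClosed_bad n, S.isNowhereDense_bad n⟩).2
      |>.inter_open_nonempty _ S.isBox_box.isOpen_pi S.nonempty_box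
  obtain ⟨u, hu, hwu, hu_sub⟩ :=
    exists_isBox_subset (S.isBox_box.isOpen_pi.sdiff (S.isClosed_bad n)) hw
  have hu_box (j : ℕ) : u j ⊆ S.box j :=
    (univ_pi_subset_univ_pi_iff.1 (hu_sub.trans sdiff_subset)).resolve_right
      (fun ⟨i, hi⟩ => (hi ▸ hwu i trivial : w i ∈ (∅ : Set X))) j
  set M := ⋃ m, {a | ¬IsNowhereDense (Prod.mk a ⁻¹' (e ⁻¹' S.bad m))}
  have hM : IsMeagre M := isMeagre_iUnion fun m =>
    ((S.isClosed_bad m).preimage e.continuous).isMeagre_setOf_not_isNowhereDense_prodMk_preimage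
      ((S.isNowhereDense_bad m).preimage_homeomorph e)
  obtain ⟨z, ⟨hzZ, hzu⟩, hzM⟩ : ∃ z ∈ Z ∩ u 0, z ∉ M :=
    not_subset.1 fun hsub => hZ (u 0) (hu.1 0) ⟨w 0, hwu 0 trivial⟩ (hM.mono hsub)
  let T : PiStage X :=
    { box := fun j => u (j + 1)
      isBox_box := hu.comp_succ
      nonempty_box := ⟨fun j => w (j + 1), fun j _ => hwu (j + 1) trivial⟩
      bad := fun m => Prod.mk z ⁻¹' (e ⁻¹' S.bad m)
      isClosed_bad := fun m => ((S.isClosed_bad m).preimage e.continuous).preimage (by fun_prop)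
      isNowhereDense_bad := fun m => not_not.1 fun h => hzM (mem_iUnion.2 ⟨m, h⟩) }
  refine ⟨z, hzZ, T, hu_box 0 hzu, fun j => hu_box (j + 1), fun m => rfl, ?_⟩
  refine disjoint_left.2 fun y hy hy_bad => (hu_sub (a := e (z, y)) ?_).2 hy_bad
  rintro (_ | j) -
  exacts [hzu, hy j trivial]

theorem mem_of_mem_zero_of_shift_subset {α : Type*} {u : ℕ → ℕ → Set α} {x : ℕ → α}
    (hx : ∀ n, x n ∈ u n 0) (hu : ∀ n j, u (n + 1) j ⊆ u n (j + 1)) (n j : ℕ) :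
    x (n + j) ∈ u n j := by
  induction j generalizing n with
  | zero => exact hx n
  | succ j ih => exact hu n j (by simpa only [add_right_comm, add_assoc] using ih (n + 1))

theorem isNowhereMeagre_univ_pi [SecondCountableTopology X] {Z : ℕ → Set X}
    (hZ : ∀ n, IsNowhereMeagre (Z n)) : IsNowhereMeagre (univ.pi Z) := by
  intro U hU ⟨w, hw⟩ hmeagre
  obtain ⟨F, hF, hcover⟩ := hmeagre.exists_closed_isNowhereDense_cover
  obtain ⟨u₀, hu₀, hwu₀, hu₀U⟩ := exists_isBox_subset hU hw
  choose z hzZ next hz_box hnext_box hnext_bad hnext_disj using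
    fun S n => PiStage.exists_next (hZ n) S n
  let S₀ : PiStage X := ⟨u₀, hu₀, ⟨w, hwu₀⟩, F, fun m => (hF m).1, fun m => (hF m).2⟩
  let S (n : ℕ) : PiStage X := Nat.rec S₀ (fun k Sk => next Sk k) n
  let x (n : ℕ) : X := z (S n) n
  have hx_box : ∀ n j, x (n + j) ∈ (S n).box j :=
    mem_of_mem_zero_of_shift_subset (fun n => hz_box _ n) fun n => hnext_box (S n) n
  have hx_bad (m : ℕ) (hxm : x ∈ F m) (n : ℕ) : (fun j => x (n + j)) ∈ (S n).bad m := by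
    induction n with
    | zero =>
      show _ ∈ F m
      simpa only [zero_add] using hxm
    | succ n ih =>
      change _ ∈ (next (S n) n).bad m
      rw [hnext_bad, mem_preimage, mem_preimage]
      show consHomeomorph X (x n, fun j => x (n + 1 + j)) ∈ (S n).bad m
      rwa [consHomeomorph_shift]
  have hxU : x ∈ U := hu₀U fun j _ =>
    (by simpa only [zero_add] using hx_box 0 j : x j ∈ (S 0).box j)
  obtain ⟨m, hm⟩ := mem_iUnion.1 (hcover ⟨fun n _ => hzZ _ n, hxU⟩)
  exact disjoint_left.1 (hnext_disj (S m) m) (fun j _ => hx_box (m + 1) j) (hx_bad m hm (m + 1))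

/-- If `Z ⊆ 2^ω` is nowhere meager in the Cantor space, then `Z` is dense,
`Z` is a Baire space, and `Z^ω` is a Baire space. -/
theorem nowhereMeagre_cantor_baire_power (Z : Set (ℕ → Bool))
    (h : ∀ U : Set (ℕ → Bool), IsOpen U → U.Nonempty → ¬ IsMeagre (Z ∩ U)) :
    Dense Z ∧ BaireSpace Z ∧ BaireSpace (ℕ → Z) := by
  have hZ : IsNowhereMeagre Z := h
  refine ⟨hZ.dense, IsNowhereMeagre.baireSpace_of_isInducing .subtypeVal ?_,
    IsNowhereMeagre.baireSpace_of_isInducing (.piMap fun _ => .subtypeVal) ?_⟩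
  · rwa [Subtype.range_coe]
  · simpa only [range_piMap, Subtype.range_coe] using isNowhereMeagre_univ_pi fun _ => hZ
end
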